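/- Let W : ℝⁿ → ℝᵐ be surjective, b = -Wp, vᵢ = W⁺(eᵢ). If x ∈ ℝⁿ decomposes as x = p + x̃ + Σᵢ aᵢ vᵢ with x̃ ∈ ker W and aᵢ > 0 for some index i, then τ_{W,b}(x) ≠ W⁺W p. -/

import Mathlib

/-!
Since `W x + b = ∑ aᵢ eᵢ`, the ReLU keeps the positive coordinate `aᵢ`, so `σ(Wx + b) ≠ 0`;
as `W⁺` is injective, `τ(x) = W⁺σ(Wx + b) + W⁺Wp` differs from `W⁺Wp`.
-/

noncomputable section

def relu {m : ℕ} (y : EuclideanSpace ℝ (Fin m)) : EuclideanSpace ℝ (Fin m) :=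
  WithLp.toLp 2 (fun i => max (y i) 0)

/-- Truncation map τ_{W,b}(x) = W⁺(σ(Wx + b) - b), with `Wp` playing the role of W⁺. -/
def trunc {n m : ℕ} (W : EuclideanSpace ℝ (Fin n) →ₗ[ℝ] EuclideanSpace ℝ (Fin m))
    (Wp : EuclideanSpace ℝ (Fin m) →ₗ[ℝ] EuclideanSpace ℝ (Fin n))
    (b : EuclideanSpace ℝ (Fin m)) (x : EuclideanSpace ℝ (Fin n)) :
    EuclideanSpace ℝ (Fin n) :=
  Wp (relu (W x + b) - b)

theorem relu_apply {m : ℕ} (y : EuclideanSpace ℝ (Fin m)) (i : Fin m) :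
    relu y i = max (y i) 0 :=
  rfl

theorem relu_ne_zero_of_pos {m : ℕ} {y : EuclideanSpace ℝ (Fin m)} {i : Fin m} (hi : 0 < y i) :
    relu y ≠ 0 := by
  intro h
  have hrelu := relu_apply y i
  rw [h, max_eq_left hi.le] at hrelu
  exact hi.ne' hrelu.symm

theorem EuclideanSpace.sum_smul_single_one {ι : Type*} [Fintype ι] [DecidableEq ι] (a : ι → ℝ) :
    ∑ i, a i • EuclideanSpace.single i (1 : ℝ) = WithLp.toLp 2 a := by
  ext j
  simp [Pi.single_apply]

section

variable {n m : ℕ} {W : EuclideanSpace ℝ (Fin n) →ₗ[ℝ] EuclideanSpace ℝ (Fin m)}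
  {Wp : EuclideanSpace ℝ (Fin m) →ₗ[ℝ] EuclideanSpace ℝ (Fin n)}

theorem trunc_eq_add (b : EuclideanSpace ℝ (Fin m)) (x p : EuclideanSpace ℝ (Fin n))
    (hb : b = -(W p)) :
    trunc W Wp b x = Wp (relu (W x + b)) + Wp (W p) := by
  simp [trunc, hb]

theorem trunc_eq_iff_relu_eq_zero (hWWp : ∀ y, W (Wp y) = y) (b : EuclideanSpace ℝ (Fin m))
    (x p : EuclideanSpace ℝ (Fin n)) (hb : b = -(W p)) :
    trunc W Wp b x = Wp (W p) ↔ relu (W x + b) = 0 := by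
  have hWp_inj : Function.Injective Wp := Function.LeftInverse.injective hWWp
  rw [trunc_eq_add b x p hb, add_eq_right, map_eq_zero_iff Wp hWp_inj]

end

theorem trunc_ne_of_pos_coord_general {n m : ℕ}
    (W : EuclideanSpace ℝ (Fin n) →ₗ[ℝ] EuclideanSpace ℝ (Fin m))
    (Wp : EuclideanSpace ℝ (Fin m) →ₗ[ℝ] EuclideanSpace ℝ (Fin n))
    (hWWp : ∀ y, W (Wp y) = y)
    (p : EuclideanSpace ℝ (Fin n)) (b : EuclideanSpace ℝ (Fin m)) (hb : b = -(W p))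
    (v : Fin m → EuclideanSpace ℝ (Fin n))
    (hv : ∀ i, v i = Wp (EuclideanSpace.single i (1 : ℝ)))
    (x xt : EuclideanSpace ℝ (Fin n)) (hxt : xt ∈ LinearMap.ker W)
    (a : Fin m → ℝ)
    (hx : x = p + xt + ∑ i, a i • v i)
    (hpos : ∃ i, 0 < a i) :
    trunc W Wp b x ≠ Wp (W p) := by
  obtain ⟨i, hi⟩ := hpos
  have hWx : W x + b = WithLp.toLp 2 a := by
    simp only [hx, hb, hv, map_add, map_sum, map_smul, hWWp, LinearMap.mem_ker.mp hxt,
      EuclideanSpace.sum_smul_single_one]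
    abel
  rw [Ne, trunc_eq_iff_relu_eq_zero hWWp b x p hb, hWx]
  exact relu_ne_zero_of_pos hi

/-- a point with some positive coordinate is not truncated to W⁺Wp. -/
theorem trunc_ne_of_pos_coord {n m : ℕ}
    (W : EuclideanSpace ℝ (Fin n) →ₗ[ℝ] EuclideanSpace ℝ (Fin m))
    (hW : Function.Surjective W)
    (Wp : EuclideanSpace ℝ (Fin m) →ₗ[ℝ] EuclideanSpace ℝ (Fin n))
    (hWWp : ∀ y, W (Wp y) = y)
    (hproj : ∀ x, Wp (W x) =
      (Submodule.orthogonalProjectionOnto (LinearMap.ker W)ᗮ x : EuclideanSpace ℝ (Fin n)))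
    (p : EuclideanSpace ℝ (Fin n)) (b : EuclideanSpace ℝ (Fin m)) (hb : b = -(W p))
    (v : Fin m → EuclideanSpace ℝ (Fin n))
    (hv : ∀ i, v i = Wp (EuclideanSpace.single i (1 : ℝ)))
    (x xt : EuclideanSpace ℝ (Fin n)) (hxt : xt ∈ LinearMap.ker W)
    (a : Fin m → ℝ)
    (hx : x = p + xt + ∑ i, a i • v i)
    (hpos : ∃ i, 0 < a i) :
    trunc W Wp b x ≠ Wp (W p) :=
  trunc_ne_of_pos_coord_general W Wp hWWp p b hb v hv x xt hxt a hx hpos
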